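/- arXiv:1308.4308 — 2 statements merged into one kernel-verified Lean document; each statement's English description precedes it below -/
import Mathlib

section
/- Let W be a tree (a finite connected acyclic simple graph) on the vertex set {1,…,k}. Then P_W = I_{W*}: under the identification of the variables of S with the edges of the prism W* given by x_{ij} ↔ {p_i,p_j}, x_{ji} ↔ {q_i,q_j} for each edge {i,j} of W with i<j, and x_{ii} ↔ {p_i,q_i} for each vertex i, the ideal P_W equals the kernel of the K-algebra homomorphism from S to K[t_{p_1},…,t_{p_k},t_{q_1},…,t_{q_k}] sending x_{ij} ↦ t_{p_i}t_{p_j}, x_{ji} ↦ t_{q_i}t_{q_j}, and x_{ii} ↦ t_{p_i}t_{q_i}. -/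
open MvPolynomial

/-- The set of variables of `S`: one variable `x_{ii}` for each vertex `i` of `W` and two
variables `x_{ij}`, `x_{ji}` for each edge `{i,j}` of `W`. -/
abbrev VarSet (k : ℕ) (W : SimpleGraph (Fin k)) : Type :=
  {p : Fin k × Fin k // p.1 = p.2 ∨ W.Adj p.1 p.2}

/-- The diagonal 2-minor `f_{ij} = x_{ii} x_{jj} - x_{ij} x_{ji}`. -/
noncomputable def fij (K : Type) [Field K] {k : ℕ} {W : SimpleGraph (Fin k)}
    {i j : Fin k} (h : W.Adj i j) : MvPolynomial (VarSet k W) K :=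
  X ⟨(i, i), Or.inl rfl⟩ * X ⟨(j, j), Or.inl rfl⟩ -
    X ⟨(i, j), Or.inr h⟩ * X ⟨(j, i), Or.inr h.symm⟩

/-- The ideal `P_W` generated by the diagonal 2-minors `f_{ij}` for edges `{i,j}`, `i < j`. -/
noncomputable def PG (K : Type) [Field K] (k : ℕ) (W : SimpleGraph (Fin k)) :
    Ideal (MvPolynomial (VarSet k W) K) :=
  Ideal.span {f | ∃ i j : Fin k, ∃ h : W.Adj i j, i < j ∧ f = fij K h}

/-- The `K`-algebra homomorphism from `S` to `K[t_{p_1},…,t_{p_k},t_{q_1},…,t_{q_k}]`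
(where `t_{p_i}` is the variable `X (Sum.inl i)` and `t_{q_i}` is `X (Sum.inr i)`) sending
`x_{ij} ↦ t_{p_i} t_{p_j}`, `x_{ji} ↦ t_{q_i} t_{q_j}` (for each edge `{i,j}` of `W` with
`i < j`) and `x_{ii} ↦ t_{p_i} t_{q_i}`; its kernel is the toric ideal `I_{W*}` of the prism
`W*` under the variable–edge identification `x_{ij} ↔ {p_i,p_j}`, `x_{ji} ↔ {q_i,q_j}`,
`x_{ii} ↔ {p_i,q_i}`. -/
noncomputable def prismMap (K : Type) [Field K] (k : ℕ) (W : SimpleGraph (Fin k)) :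
    MvPolynomial (VarSet k W) K →ₐ[K] MvPolynomial (Fin k ⊕ Fin k) K :=
  aeval fun v =>
    if v.1.1 = v.1.2 then X (Sum.inl v.1.1) * X (Sum.inr v.1.1)
    else if v.1.1 < v.1.2 then X (Sum.inl v.1.1) * X (Sum.inl v.1.2)
    else X (Sum.inr v.1.1) * X (Sum.inr v.1.2)

/-!
The kernel of a monomial map is spanned by the binomials `x^u - x^u'` whose exponents have the
same image. Modulo the generators `f_ij = x_ii x_jj - x_ij x_ji` of `P_W`, every monomial is
congruent to a *reduced* one, in which no edge `{i,j}` carries both `x_ij` and `x_ji`. When `W`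
is a forest, a reduced monomial is determined by its image: if two reduced monomials with the same
image differed, the edges on which they differ would form a nonempty forest, and at a leaf `i` of
it, with edge `{i,j}`, the exponents of `t_{p_i}` and `t_{q_i}` would force the exponents of
`x_ij` and `x_ji` to agree after all.
-/

theorem SimpleGraph.IsAcyclic.exists_adj_forall_adj_eq {V : Type*} [Finite V]
    {G : SimpleGraph V} (hG : G.IsAcyclic) {a b : V} (hab : G.Adj a b) :
    ∃ u v, G.Adj u v ∧ ∀ w, G.Adj u w → w = v := by
  have : Nonempty V := ⟨a⟩
  obtain ⟨u, v, p, hp, hmax⟩ := Walk.exists_isPath_forall_isPath_length_le_length G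
  have hnil : ¬p.Nil := fun hnil => by
    simpa [hnil.length_eq_zero] using hmax _ _ _ (SimpleGraph.Path.singleton hab).2
  refine ⟨u, p.snd, p.adj_snd hnil, fun w hw => hG.eq_snd_of_adj_start hp hw ?_⟩
  by_contra hwp
  simpa using hmax _ _ _ (hp.cons hwp : (Walk.cons hw.symm p).IsPath)

theorem Finsupp.sum_mul_apply_eq_of_linearCombination_eq {σ τ : Type*} [Fintype σ]
    {w : σ → τ →₀ ℕ} {u u' : σ →₀ ℕ}
    (h : linearCombination ℕ w u = linearCombination ℕ w u') (a : τ) (F : Finset σ)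
    (hF : ∀ v ∉ F, w v a ≠ 0 → u v = u' v) :
    ∑ v ∈ F, u v * w v a = ∑ v ∈ F, u' v * w v a := by
  classical
  have eval : ∀ x : σ →₀ ℕ, linearCombination ℕ w x a = ∑ v, x v * w v a := fun x => by
    simp [linearCombination_apply, sum_fintype, Finset.sum_apply']
  have hcompl : ∑ v ∈ Fᶜ, u v * w v a = ∑ v ∈ Fᶜ, u' v * w v a :=
    Finset.sum_congr rfl fun v hv => by
      by_cases hw : w v a = 0
      · simp [hw]
      · rw [hF v (Finset.mem_compl.1 hv) hw]
  have := DFunLike.congr_fun h a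
  rw [eval, eval, ← Finset.sum_add_sum_compl F, ← Finset.sum_add_sum_compl F, hcompl] at this
  exact add_right_cancel this

namespace MvPolynomial

variable {σ τ R : Type*} [CommRing R]

theorem aeval_monomial_monomial (w : σ → τ →₀ ℕ) (u : σ →₀ ℕ) (c : R) :
    aeval (fun v => monomial (w v) (1 : R)) (monomial u c) =
      monomial (Finsupp.linearCombination ℕ w u) c := by
  rw [aeval_monomial, Finsupp.linearCombination_apply, monomial_finsupp_sum_index]
  simp [monomial_pow]

theorem ker_aeval_monomial_le {w : σ → τ →₀ ℕ} {I : Ideal (MvPolynomial σ R)}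
    (hI : ∀ u u', Finsupp.linearCombination ℕ w u = Finsupp.linearCombination ℕ w u' →
      monomial u 1 - monomial u' 1 ∈ I) :
    RingHom.ker (aeval fun v => monomial (w v) (1 : R)) ≤ I := by
  set φ : MvPolynomial σ R →ₐ[R] MvPolynomial τ R := aeval fun v => monomial (w v) 1
  set s := Function.invFun (Finsupp.linearCombination ℕ w)
  -- `mapDomain s ∘ φ` replaces each monomial by a fixed one with the same image: it vanishes on
  -- the kernel, and `f - mapDomain s (φ f)` is a combination of binomials with equal images
  have hsub : ∀ f, f - AddMonoidAlgebra.mapDomain s (φ f) ∈ I := by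
    intro f
    induction f using MvPolynomial.induction_on' with
    | monomial u c =>
      rw [aeval_monomial_monomial, ← single_eq_monomial (Finsupp.linearCombination ℕ w u),
        AddMonoidAlgebra.mapDomain_single, single_eq_monomial, ← mul_one c, ← C_mul_monomial,
        ← C_mul_monomial, ← mul_sub]
      exact I.mul_mem_left _ (hI _ _ (Function.invFun_eq ⟨u, rfl⟩).symm)
    | add p q hp hq =>
      rw [map_add, AddMonoidAlgebra.mapDomain_add, add_sub_add_comm]
      exact add_mem hp hq
  intro f hf
  rw [RingHom.mem_ker] at hf
  simpa [hf] using hsub f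

end MvPolynomial

namespace PrismIdeal

variable {K : Type} [Field K] {k : ℕ} {W : SimpleGraph (Fin k)}

def diagVar (W : SimpleGraph (Fin k)) (i : Fin k) : VarSet k W := ⟨(i, i), Or.inl rfl⟩

def edgeVar {i j : Fin k} (h : W.Adj i j) : VarSet k W := ⟨(i, j), Or.inr h⟩

theorem fij_eq {i j : Fin k} (h : W.Adj i j) :
    fij K h = X (diagVar W i) * X (diagVar W j) - X (edgeVar h) * X (edgeVar h.symm) := rfl

theorem fij_mem_PG {i j : Fin k} (h : W.Adj i j) : fij K h ∈ PG K k W := by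
  rcases h.ne.lt_or_gt with hij | hji
  · exact Ideal.subset_span ⟨i, j, h, hij, rfl⟩
  · rw [show fij K h = fij K h.symm by rw [fij_eq, fij_eq]; ring]
    exact Ideal.subset_span ⟨j, i, h.symm, hji, rfl⟩

theorem monomial_edgeVars_sub_monomial_diagVars_mem_PG {i j : Fin k} (h : W.Adj i j)
    (u : VarSet k W →₀ ℕ) :
    monomial (Finsupp.single (edgeVar h) 1 + Finsupp.single (edgeVar h.symm) 1 + u) (1 : K) -
      monomial (Finsupp.single (diagVar W i) 1 + Finsupp.single (diagVar W j) 1 + u) 1 ∈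
        PG K k W := by
  have hsplit : ∀ a b : VarSet k W,
      monomial (Finsupp.single a 1 + Finsupp.single b 1 + u) (1 : K) =
        X a * X b * monomial u 1 := fun a b => by
    simp only [X, monomial_mul, one_mul]
  rw [hsplit, hsplit, ← sub_mul, ← neg_sub, ← fij_eq h, neg_mul]
  exact neg_mem (Ideal.mul_mem_right _ _ (fij_mem_PG h))

noncomputable def prismWeight (v : VarSet k W) : Fin k ⊕ Fin k →₀ ℕ :=
  if v.1.1 = v.1.2 then Finsupp.single (.inl v.1.1) 1 + Finsupp.single (.inr v.1.1) 1
  else if v.1.1 < v.1.2 then Finsupp.single (.inl v.1.1) 1 + Finsupp.single (.inl v.1.2) 1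
  else Finsupp.single (.inr v.1.1) 1 + Finsupp.single (.inr v.1.2) 1

theorem prismMap_eq_aeval :
    prismMap K k W = aeval fun v => monomial (prismWeight v) (1 : K) := by
  unfold prismMap prismWeight
  congr 1
  funext v
  split_ifs <;> simp only [X, monomial_mul, one_mul]

theorem prismWeight_diag_add_diag {i j : Fin k} (h : W.Adj i j) :
    prismWeight (diagVar W i) + prismWeight (diagVar W j) =
      prismWeight (edgeVar h) + prismWeight (edgeVar h.symm) := by
  rcases h.ne.lt_or_gt with hij | hji
  · simp [prismWeight, diagVar, edgeVar, hij, hij.ne, hij.ne', hij.not_gt]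
    abel
  · simp [prismWeight, diagVar, edgeVar, hji, hji.ne, hji.ne', hji.not_gt]
    abel

theorem touches_of_prismWeight_ne_zero {v : VarSet k W} {i : Fin k}
    {a : Fin k ⊕ Fin k} (ha : a = .inl i ∨ a = .inr i) (hv : prismWeight v a ≠ 0) :
    v.1.1 = i ∨ v.1.2 = i := by
  unfold prismWeight at hv
  rcases ha with rfl | rfl <;> split_ifs at hv <;> simp [Finsupp.single_apply] at hv <;> grind

theorem PG_le_ker : PG K k W ≤ RingHom.ker (prismMap K k W).toRingHom := by
  rw [PG, Ideal.span_le]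
  rintro _ ⟨i, j, h, -, rfl⟩
  simp only [SetLike.mem_coe, AlgHom.toRingHom_eq_coe, RingHom.mem_ker, RingHom.coe_coe,
    prismMap_eq_aeval, fij_eq, map_sub, map_mul, aeval_X, monomial_mul, one_mul,
    prismWeight_diag_add_diag h, sub_self]

noncomputable def prismDegree : (VarSet k W →₀ ℕ) →ₗ[ℕ] Fin k ⊕ Fin k →₀ ℕ :=
  Finsupp.linearCombination ℕ prismWeight

def IsReduced (u : VarSet k W →₀ ℕ) : Prop :=
  ∀ ⦃i j : Fin k⦄ (h : W.Adj i j), u (edgeVar h) = 0 ∨ u (edgeVar h.symm) = 0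

noncomputable def offDiagDegree : (VarSet k W →₀ ℕ) →ₗ[ℕ] ℕ :=
  Finsupp.linearCombination ℕ fun v => if v.1.1 = v.1.2 then 0 else 1

theorem exists_isReduced (u : VarSet k W →₀ ℕ) :
    ∃ r, IsReduced r ∧ prismDegree r = prismDegree u ∧
      monomial u (1 : K) - monomial r 1 ∈ PG K k W := by
  induction hn : offDiagDegree u using Nat.strong_induction_on generalizing u with
  | _ n ih =>
  by_cases hu : IsReduced u
  · exact ⟨u, hu, rfl, by simp⟩
  obtain ⟨i, j, h, hij, hji⟩ :
      ∃ i j, ∃ h : W.Adj i j, u (edgeVar h) ≠ 0 ∧ u (edgeVar h.symm) ≠ 0 := by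
    simpa [IsReduced] using hu
  obtain ⟨u₁, rfl⟩ : ∃ u₁,
      u = Finsupp.single (edgeVar h) 1 + Finsupp.single (edgeVar h.symm) 1 + u₁ := by
    refine exists_add_of_le fun v => ?_
    simp only [Finsupp.add_apply, Finsupp.single_apply]
    have hne : edgeVar h ≠ edgeVar h.symm := by simp [edgeVar, h.ne]
    grind
  set u₂ := Finsupp.single (diagVar W i) 1 + Finsupp.single (diagVar W j) 1 + u₁
  have hlt : offDiagDegree u₂ < n := by
    rw [← hn]
    simp [u₂, offDiagDegree, diagVar, edgeVar, h.ne, h.ne']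
  obtain ⟨r, hr, hdeg, hmem⟩ := ih _ hlt u₂ rfl
  refine ⟨r, hr, hdeg.trans ?_, ?_⟩
  · simp [u₂, prismDegree, prismWeight_diag_add_diag h]
  · rw [← sub_add_sub_cancel _ (monomial u₂ 1)]
    exact add_mem (monomial_edgeVars_sub_monomial_diagVars_mem_PG h u₁) hmem

variable {u u' : VarSet k W →₀ ℕ}

def diffGraph (u u' : VarSet k W →₀ ℕ) : SimpleGraph (Fin k) where
  Adj i j := ∃ h : W.Adj i j,
    u (edgeVar h) ≠ u' (edgeVar h) ∨ u (edgeVar h.symm) ≠ u' (edgeVar h.symm)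
  symm := ⟨fun _ _ ⟨h, hne⟩ => ⟨h.symm, hne.symm⟩⟩
  loopless := ⟨fun _ ⟨h, _⟩ => h.ne rfl⟩

theorem diffGraph_adj {i j : Fin k} :
    (diffGraph u u').Adj i j ↔ ∃ h : W.Adj i j,
      u (edgeVar h) ≠ u' (edgeVar h) ∨ u (edgeVar h.symm) ≠ u' (edgeVar h.symm) :=
  Iff.rfl

theorem diffGraph_le (u u' : VarSet k W →₀ ℕ) : diffGraph u u' ≤ W :=
  fun _ _ hadj => (diffGraph_adj.1 hadj).1

theorem eq_on_edge_of_forall_eq_on_other_edges (hdeg : prismDegree u = prismDegree u')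
    (hu : IsReduced u) (hu' : IsReduced u') {i j : Fin k} (h : W.Adj i j)
    (hother : ∀ l (hl : W.Adj i l), l ≠ j →
      u (edgeVar hl) = u' (edgeVar hl) ∧ u (edgeVar hl.symm) = u' (edgeVar hl.symm)) :
    u (edgeVar h) = u' (edgeVar h) ∧ u (edgeVar h.symm) = u' (edgeVar h.symm) := by
  classical
  have hsum : ∀ a : Fin k ⊕ Fin k, (a = .inl i ∨ a = .inr i) →
      ∑ v ∈ {diagVar W i, edgeVar h, edgeVar h.symm}, u v * prismWeight v a =
        ∑ v ∈ {diagVar W i, edgeVar h, edgeVar h.symm}, u' v * prismWeight v a := by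
    refine fun a ha => Finsupp.sum_mul_apply_eq_of_linearCombination_eq hdeg a _ ?_
    rintro ⟨⟨p, q⟩, hpq | hpq⟩ hv hw <;>
      rcases touches_of_prismWeight_ne_zero ha hw with rfl | rfl
    · obtain rfl : p = q := hpq
      simp [diagVar] at hv
    · obtain rfl : p = q := hpq
      simp [diagVar] at hv
    · have hq : q ≠ j := by rintro rfl; simp [edgeVar] at hv
      exact (hother q hpq hq).1
    · have hp : p ≠ j := by rintro rfl; simp [edgeVar] at hv
      exact (hother p hpq.symm hp).2
  have hl := hsum (.inl i) (Or.inl rfl)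
  have hr := hsum (.inr i) (Or.inr rfl)
  have hred := hu h
  have hred' := hu' h
  rcases h.ne.lt_or_gt with hlt | hlt <;>
    simp [Finset.sum_insert, prismWeight, diagVar, edgeVar, hlt, hlt.ne, hlt.ne', hlt.not_gt]
      at hl hr hred hred' ⊢ <;>
    omega

theorem eq_on_diag_of_forall_eq_on_edges (hdeg : prismDegree u = prismDegree u')
    (hedge : ∀ ⦃i j : Fin k⦄ (h : W.Adj i j), u (edgeVar h) = u' (edgeVar h)) (i : Fin k) :
    u (diagVar W i) = u' (diagVar W i) := by
  classical
  have := Finsupp.sum_mul_apply_eq_of_linearCombination_eq hdeg (.inl i) {diagVar W i} ?_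
  · simpa [prismWeight, diagVar] using this
  · rintro ⟨⟨p, q⟩, hpq | hpq⟩ hv hw
    · obtain rfl : p = q := hpq
      rcases touches_of_prismWeight_ne_zero (Or.inl rfl) hw with rfl | rfl <;>
        simp [diagVar] at hv
    · exact hedge hpq

theorem eq_of_prismDegree_eq (hW : W.IsAcyclic) (hu : IsReduced u) (hu' : IsReduced u')
    (hdeg : prismDegree u = prismDegree u') : u = u' := by
  have hedge : ∀ ⦃i j : Fin k⦄ (h : W.Adj i j), u (edgeVar h) = u' (edgeVar h) := by
    by_contra! ⟨i, j, h, hne⟩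
    obtain ⟨a, b, hab, hleaf⟩ := (hW.anti (diffGraph_le u u')).exists_adj_forall_adj_eq
      (diffGraph_adj.2 ⟨h, .inl hne⟩)
    obtain ⟨hab, hdiff⟩ := diffGraph_adj.1 hab
    have hother : ∀ l (hl : W.Adj a l), l ≠ b →
        u (edgeVar hl) = u' (edgeVar hl) ∧ u (edgeVar hl.symm) = u' (edgeVar hl.symm) :=
      fun l hl hlb => by
        by_contra hne
        exact hlb (hleaf l (diffGraph_adj.2 ⟨hl, not_and_or.mp hne⟩))
    have := eq_on_edge_of_forall_eq_on_other_edges hdeg hu hu' hab hother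
    tauto
  ext ⟨⟨p, q⟩, hpq | hpq⟩
  · obtain rfl : p = q := hpq
    exact eq_on_diag_of_forall_eq_on_edges hdeg hedge p
  · exact hedge hpq

theorem binomial_mem_PG (hW : W.IsAcyclic)
    (hdeg : prismDegree u = prismDegree u') : monomial u (1 : K) - monomial u' 1 ∈ PG K k W := by
  obtain ⟨r, hr, hdeg_r, hmem⟩ := exists_isReduced (K := K) u
  obtain ⟨r', hr', hdeg_r', hmem'⟩ := exists_isReduced (K := K) u'
  obtain rfl : r = r' := eq_of_prismDegree_eq hW hr hr' (by rw [hdeg_r, hdeg_r', hdeg])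
  rw [← sub_sub_sub_cancel_right _ _ (monomial r 1)]
  exact sub_mem hmem hmem'

end PrismIdeal

/-- If `W` is a tree, then `P_W = I_{W*}`: the ideal `P_W` equals the kernel
of the `K`-algebra homomorphism `x_{ij} ↦ t_{p_i}t_{p_j}`, `x_{ji} ↦ t_{q_i}t_{q_j}`,
`x_{ii} ↦ t_{p_i}t_{q_i}`. -/
theorem PG_eq_toric_of_tree (K : Type) [Field K] (k : ℕ) (W : SimpleGraph (Fin k))
    (htree : W.IsTree) :
    PG K k W = RingHom.ker (prismMap K k W).toRingHom := by
  refine le_antisymm PrismIdeal.PG_le_ker ?_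
  rw [PrismIdeal.prismMap_eq_aeval]
  exact ker_aeval_monomial_le fun _ _ => PrismIdeal.binomial_mem_PG htree.isAcyclic
end

section
/- Let W be a finite connected simple graph on the vertex set {1,…,k} that is not bipartite and has exactly one cycle (equivalently: W is connected, non-bipartite, and has as many edges as vertices). Then P_W = I_{W*}: under the identification x_{ij} ↔ {p_i,p_j}, x_{ji} ↔ {q_i,q_j} for each edge {i,j} of W with i<j, and x_{ii} ↔ {p_i,q_i} for each vertex i, the ideal P_W equals the kernel of the K-algebra homomorphism from S to K[t_{p_1},…,t_{p_k},t_{q_1},…,t_{q_k}] sending x_{ij} ↦ t_{p_i}t_{p_j}, x_{ji} ↦ t_{q_i}t_{q_j}, and x_{ii} ↦ t_{p_i}t_{q_i}. -/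
/-!
The prism map sends monomials to monomials, so its kernel is spanned by the binomials
`x^a - x^b` with equal images. Modulo `P_W` the relation `x_ij x_ji ≡ x_ii x_jj` rewrites every
monomial, without changing its image, to a standard one in which no edge carries both `x_ij`
and `x_ji`. A standard monomial is determined by its image: at each vertex `t` the `p`- and
`q`-degrees differ by `∑_j ±(a_tj - a_jt)`, which is the unsigned incidence matrix of `W`
applied to the signed edge differences. For `W` connected and non-bipartite the columns of that
matrix span `ℚ^k` (an odd closed walk produces each unit vector), and since `W` has as many
edges as vertices they are linearly independent. Hence the edge differences, and by
standardness the off-diagonal exponents, are determined; the `p`-degrees then determine the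
diagonal.
-/

open MvPolynomial

open Finset

namespace MvPolynomial

theorem X_mul_X {R σ : Type*} [CommSemiring R] (v w : σ) :
    (X v * X w : MvPolynomial σ R) = monomial (Finsupp.single v 1 + Finsupp.single w 1) 1 := by
  rw [monomial_single_add, pow_one]
  rfl

theorem ker_le_of_monomial_sub_monomial_mem {R σ τ : Type*} [CommRing R]
    (φ : MvPolynomial σ R →ₐ[R] MvPolynomial τ R) (A : (σ →₀ ℕ) → (τ →₀ ℕ))
    (hφ : ∀ m, φ (monomial m 1) = monomial (A m) 1) {I : Ideal (MvPolynomial σ R)}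
    (hI : ∀ a b, A a = A b → monomial a 1 - monomial b 1 ∈ I) :
    RingHom.ker φ ≤ I := by
  let π := (Ideal.Quotient.mkₐ R I).toLinearMap
  -- `ψ` sends `t^n` to the class of a chosen preimage monomial, so that `ψ ∘ φ = π`
  let ψ := (basisMonomials τ R).constr R fun n => π (monomial (Function.invFun A n) 1)
  have hfactor : ψ ∘ₗ φ.toLinearMap = π := (basisMonomials σ R).ext fun m => by
    have hm : A (Function.invFun A (A m)) = A m := Function.invFun_eq ⟨m, rfl⟩
    simp only [coe_basisMonomials, LinearMap.comp_apply, AlgHom.toLinearMap_apply, hφ]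
    have hψ : ψ (monomial (A m) 1) = π (monomial (Function.invFun A (A m)) 1) := by
      simpa using (basisMonomials τ R).constr_basis R _ (A m)
    exact hψ.trans (Ideal.Quotient.eq.2 (hI _ _ hm))
  intro q hq
  rw [← Ideal.Quotient.eq_zero_iff_mem]
  have := LinearMap.congr_fun hfactor q
  rw [LinearMap.comp_apply, AlgHom.toLinearMap_apply, hq, map_zero] at this
  exact this.symm

end MvPolynomial

namespace SimpleGraph

theorem Connected.exists_odd_loop_of_not_colorable_two {V : Type*} {G : SimpleGraph V}
    (hconn : G.Connected) (hnb : ¬ G.Colorable 2) :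
    ∃ (v : V) (p : G.Walk v v), Odd p.length := by
  by_contra! heven
  obtain ⟨v₀⟩ := hconn.nonempty
  let w : ∀ v, G.Walk v₀ v := fun v => (hconn v₀ v).some
  refine hnb (Coloring.mk (fun v => decide (Even (w v).length)) fun {u v} huv hc => ?_).colorable
  have h := heven v₀ ((w u).append (.cons huv (w v).reverse))
  simp only [decide_eq_decide] at hc
  rw [Walk.length_append, Walk.length_cons, Walk.length_reverse] at h
  exact h (by grind)

variable {V F : Type*} [DecidableEq V] [Field F] {G : SimpleGraph V} [DecidableRel G.Adj]

theorem incMatrix_mk_of_adj {x y : V} (h : G.Adj x y) :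
    (fun v => G.incMatrix F v s(x, y)) = Pi.single x 1 + Pi.single y 1 := by
  funext v
  by_cases hx : v = x <;> by_cases hy : v = y <;>
    simp_all [incMatrix_apply', mk'_mem_incidenceSet_iff, h.ne]

theorem sub_neg_one_pow_smul_mem_span_incMatrix {x y : V} (p : G.Walk x y) :
    Pi.single x 1 - (-1 : F) ^ p.length • Pi.single y 1 ∈
      Submodule.span F (Set.range fun e : G.edgeSet => fun v => G.incMatrix F v e) := by
  induction p with
  | nil => simp
  | @cons x z y h p ih =>
    have hedge : Pi.single x 1 + Pi.single z 1 ∈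
        Submodule.span F (Set.range fun e : G.edgeSet => fun v => G.incMatrix F v e) :=
      Submodule.subset_span ⟨⟨s(x, z), h⟩, incMatrix_mk_of_adj h⟩
    convert sub_mem hedge ih using 1
    rw [Walk.length_cons, pow_succ]
    module

variable [Fintype V]

theorem span_incMatrix_eq_top (h2 : (2 : F) ≠ 0) (hconn : G.Connected) (hnb : ¬ G.Colorable 2) :
    Submodule.span F (Set.range fun e : G.edgeSet => fun v => G.incMatrix F v e) = ⊤ := by
  set U := Submodule.span F (Set.range fun e : G.edgeSet => fun v => G.incMatrix F v e)
  obtain ⟨v₀, p, hp⟩ := hconn.exists_odd_loop_of_not_colorable_two hnb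
  -- along an odd loop the signs add up instead of cancelling
  have h₀ : Pi.single v₀ 1 ∈ U := by
    have := sub_neg_one_pow_smul_mem_span_incMatrix (F := F) p
    rwa [hp.neg_one_pow, neg_one_smul, sub_neg_eq_add, ← two_smul F,
      Submodule.smul_mem_iff _ h2] at this
  have hsingle : ∀ v, Pi.single v 1 ∈ U := fun v => by
    have hw := sub_neg_one_pow_smul_mem_span_incMatrix (F := F) (hconn v v₀).some
    simpa using add_mem hw (U.smul_mem ((-1 : F) ^ (hconn v v₀).some.length) h₀)
  rw [eq_top_iff, ← (Pi.basisFun F V).span_eq, Submodule.span_le]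
  rintro _ ⟨v, rfl⟩
  simpa using hsingle v

theorem linearIndependent_incMatrix (h2 : (2 : F) ≠ 0) (hconn : G.Connected)
    (hnb : ¬ G.Colorable 2) (hcard : #G.edgeFinset = Fintype.card V) :
    LinearIndependent F fun e : G.edgeSet => fun v => G.incMatrix F v e :=
  linearIndependent_of_top_le_span_of_card_eq_finrank (span_incMatrix_eq_top h2 hconn hnb).ge
    (by rw [Module.finrank_fintype_fun_eq_card, ← edgeFinset_card, hcard])

theorem sum_mul_incMatrix (v : V) (g : Sym2 V → F) :
    ∑ e : G.edgeSet, g e * G.incMatrix F v e = ∑ w ∈ G.neighborFinset v, g s(v, w) := by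
  calc ∑ e : G.edgeSet, g e * G.incMatrix F v e
      = ∑ e ∈ G.edgeFinset, g e * G.incMatrix F v e :=
        (sum_subtype _ (p := (· ∈ G.edgeSet)) (fun _ => mem_edgeFinset)
          fun e => g e * G.incMatrix F v e).symm
    _ = ∑ e ∈ G.incidenceFinset v, g e := by
      rw [incidenceFinset_eq_filter, sum_filter]
      refine sum_congr rfl fun e he => ?_
      simp [incMatrix_apply', incidenceSet, mem_edgeFinset.1 he]
    _ = ∑ w ∈ G.neighborFinset v, g s(v, w) := by
      symm
      refine sum_bij (fun w _ => s(v, w)) (fun w hw => ?_) (fun _ _ _ _ => Sym2.congr_right.1)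
        (fun e he => ?_) fun _ _ => rfl
      · simpa using (mem_neighborFinset G v w).1 hw
      · obtain ⟨he, hv⟩ := (mem_incidenceFinset G v e).1 he
        refine ⟨Sym2.Mem.other hv, ?_, Sym2.other_spec hv⟩
        rw [mem_neighborFinset, ← mem_incidenceSet, Sym2.other_spec hv]
        exact ⟨he, hv⟩

theorem eq_zero_of_symm_of_sum_eq_zero (h2 : (2 : F) ≠ 0) (hconn : G.Connected)
    (hnb : ¬ G.Colorable 2) (hcard : #G.edgeFinset = Fintype.card V) {S : V → V → F}
    (hsymm : ∀ i j, S i j = S j i) (hadj : ∀ i j, ¬ G.Adj i j → S i j = 0)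
    (hsum : ∀ i, ∑ j, S i j = 0) (i j : V) : S i j = 0 := by
  by_cases hij : G.Adj i j
  swap
  · exact hadj i j hij
  let c : Sym2 V → F := Sym2.lift ⟨S, hsymm⟩
  have hli := linearIndependent_incMatrix h2 hconn hnb hcard
  have hc : ∑ e : G.edgeSet, c e • (fun v => G.incMatrix F v e) = 0 := funext fun v => by
    rw [Finset.sum_apply]
    simp only [Pi.smul_apply, smul_eq_mul, Pi.zero_apply]
    rw [sum_mul_incMatrix, ← hsum v]
    exact sum_subset (subset_univ _) fun w _ hw => hadj v w ((mem_neighborFinset G v w).not.1 hw)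
  exact Fintype.linearIndependent_iff.1 hli (fun e => c e) hc ⟨s(i, j), hij⟩

end SimpleGraph

section Prism

variable {k : ℕ} {W : SimpleGraph (Fin k)}

noncomputable def prismWeight (p : Fin k × Fin k) : Fin k ⊕ Fin k →₀ ℕ :=
  if p.1 = p.2 then .single (.inl p.1) 1 + .single (.inr p.1) 1
  else if p.1 < p.2 then .single (.inl p.1) 1 + .single (.inl p.2) 1
  else .single (.inr p.1) 1 + .single (.inr p.2) 1

variable (W) in
noncomputable def prismDegree : (VarSet k W →₀ ℕ) →+ (Fin k ⊕ Fin k →₀ ℕ) :=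
  Finsupp.weight fun v => prismWeight v.1

variable (W) in
noncomputable def diagExponent (i j : Fin k) : VarSet k W →₀ ℕ :=
  .single ⟨(i, i), .inl rfl⟩ 1 + .single ⟨(j, j), .inl rfl⟩ 1

noncomputable def offDiagExponent {i j : Fin k} (h : W.Adj i j) : VarSet k W →₀ ℕ :=
  .single ⟨(i, j), .inr h⟩ 1 + .single ⟨(j, i), .inr h.symm⟩ 1

theorem prismMap_X (K : Type) [Field K] (v : VarSet k W) :
    prismMap K k W (X v) = monomial (prismWeight v.1) 1 := by
  rw [prismMap, aeval_X, prismWeight]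
  split_ifs <;> exact X_mul_X _ _

theorem prismMap_monomial (K : Type) [Field K] (m : VarSet k W →₀ ℕ) :
    prismMap K k W (monomial m 1) = monomial (prismDegree W m) 1 := by
  rw [monomial_eq, C_1, one_mul, Finsupp.prod, map_prod, prismDegree, Finsupp.weight_apply,
    Finsupp.sum, monomial_sum_one]
  refine prod_congr rfl fun v _ => ?_
  rw [map_pow, prismMap_X, monomial_pow, one_pow]

theorem prismWeight_add_prismWeight_swap {i j : Fin k} (h : i ≠ j) :
    prismWeight (i, j) + prismWeight (j, i) = prismWeight (i, i) + prismWeight (j, j) := by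
  rcases h.lt_or_gt with h | h <;> simp [prismWeight, h.ne, h.ne', h, h.not_gt] <;> abel

theorem prismDegree_offDiagExponent {i j : Fin k} (h : W.Adj i j) :
    prismDegree W (offDiagExponent h) = prismDegree W (diagExponent W i j) := by
  simp only [offDiagExponent, diagExponent, map_add, prismDegree, Finsupp.weight_single, one_smul]
  exact prismWeight_add_prismWeight_swap h.ne

theorem fij_eq (K : Type) [Field K] {i j : Fin k} (h : W.Adj i j) :
    fij K h = monomial (diagExponent W i j) 1 - monomial (offDiagExponent h) 1 := by
  rw [fij, X_mul_X, X_mul_X, diagExponent, offDiagExponent]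

theorem fij_mem_PG (K : Type) [Field K] {i j : Fin k} (h : W.Adj i j) : fij K h ∈ PG K k W := by
  rcases h.ne.lt_or_gt with hlt | hgt
  · exact Ideal.subset_span ⟨i, j, h, hlt, rfl⟩
  · have : fij K h = fij K h.symm := by rw [fij, fij]; ring
    rw [this]
    exact Ideal.subset_span ⟨j, i, h.symm, hgt, rfl⟩

theorem PG_le_ker (K : Type) [Field K] : PG K k W ≤ RingHom.ker (prismMap K k W).toRingHom := by
  rw [PG, Ideal.span_le]
  rintro _ ⟨i, j, h, -, rfl⟩
  simp only [SetLike.mem_coe, RingHom.mem_ker, AlgHom.toRingHom_eq_coe, RingHom.coe_coe]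
  rw [fij_eq, map_sub, prismMap_monomial, prismMap_monomial, prismDegree_offDiagExponent,
    sub_self]

end Prism

section Standard

variable {k : ℕ} {W : SimpleGraph (Fin k)}

def IsStandardExponent (a : VarSet k W →₀ ℕ) : Prop :=
  ∀ i j (h : W.Adj i j), a ⟨(i, j), .inr h⟩ = 0 ∨ a ⟨(j, i), .inr h.symm⟩ = 0

variable (W) in
noncomputable def offDiagDegree : (VarSet k W →₀ ℕ) →+ ℕ :=
  Finsupp.weight fun v => if v.1.1 = v.1.2 then 0 else 1

theorem monomial_offDiagExponent_add_sub_mem_PG (K : Type) [Field K] (a : VarSet k W →₀ ℕ)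
    {i j : Fin k} (h : W.Adj i j) :
    monomial (offDiagExponent h + a) (1 : K) - monomial (diagExponent W i j + a) 1 ∈
      PG K k W := by
  convert Ideal.mul_mem_right (monomial a 1) _ (neg_mem (fij_mem_PG K h)) using 1
  rw [fij_eq, neg_sub, sub_mul, monomial_mul, monomial_mul, one_mul]

theorem exists_isStandardExponent (K : Type) [Field K] (a : VarSet k W →₀ ℕ) :
    ∃ b, IsStandardExponent b ∧ prismDegree W b = prismDegree W a ∧
      monomial a (1 : K) - monomial b 1 ∈ PG K k W := by
  induction hn : offDiagDegree W a using Nat.strong_induction_on generalizing a with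
  | _ n ih =>
  by_cases ha : IsStandardExponent a
  · exact ⟨a, ha, rfl, by simp⟩
  obtain ⟨i, j, h, hij, hji⟩ : ∃ i j, ∃ h : W.Adj i j,
      a ⟨(i, j), .inr h⟩ ≠ 0 ∧ a ⟨(j, i), .inr h.symm⟩ ≠ 0 := by
    simpa [IsStandardExponent] using ha
  have hne : (⟨(i, j), .inr h⟩ : VarSet k W) ≠ ⟨(j, i), .inr h.symm⟩ := by simp [h.ne]
  have hle : offDiagExponent h ≤ a := Finsupp.le_def.2 fun v => by
    simp only [offDiagExponent, Finsupp.coe_add, Pi.add_apply, Finsupp.single_apply]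
    split_ifs with h₁ h₂ <;> subst_vars <;> first | omega | exact absurd h₂ hne.symm
  obtain ⟨a, rfl⟩ := exists_add_of_le hle
  have hlt : offDiagDegree W (diagExponent W i j + a) < n := by
    simp [offDiagDegree, offDiagExponent, diagExponent, Finsupp.weight_single, h.ne] at hn ⊢
    omega
  obtain ⟨b, hb, hdeg, hmem⟩ := ih _ hlt _ rfl
  refine ⟨b, hb, ?_, ?_⟩
  · rw [hdeg, map_add, map_add, prismDegree_offDiagExponent h]
  · simpa using add_mem (monomial_offDiagExponent_add_sub_mem_PG K a h) hmem

end Standard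

section OrientationSign

variable {k : ℕ} (R : Type*) [CommRing R]

def orientationSign (i j : Fin k) : R := (if i < j then 1 else 0) - if j < i then 1 else 0

theorem orientationSign_swap (i j : Fin k) : orientationSign R j i = -orientationSign R i j := by
  simp [orientationSign]

theorem prismWeight_inl_sub_inr (p : Fin k × Fin k) (t : Fin k) :
    (prismWeight p (.inl t) : R) - prismWeight p (.inr t) =
      orientationSign R p.1 p.2 * ((if p.1 = t then 1 else 0) + if p.2 = t then 1 else 0) := by
  obtain ⟨i, j⟩ := p
  rcases lt_trichotomy i j with h | rfl | h
  · simp [prismWeight, orientationSign, h, h.ne, h.not_gt, Finsupp.single_apply]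
  · simp [prismWeight, orientationSign, Finsupp.single_apply]
  · simp [prismWeight, orientationSign, h, h.ne', h.not_gt, Finsupp.single_apply]

theorem sum_orientationSign_mul_sub (d : Fin k × Fin k → R) (t : Fin k) :
    ∑ j, orientationSign R t j * (d (t, j) - d (j, t)) =
      ∑ p, d p * ((prismWeight p (.inl t) : R) - prismWeight p (.inr t)) := by
  simp_rw [prismWeight_inl_sub_inr, mul_add, mul_ite, mul_one, mul_zero, sum_add_distrib,
    Fintype.sum_prod_type, sum_ite_eq', ← ite_sum_zero, sum_ite_eq', mem_univ, if_true,
    orientationSign_swap R _ t, ← sum_add_distrib]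
  exact sum_congr rfl fun j _ => by ring

end OrientationSign

section Injectivity

variable {k : ℕ} {W : SimpleGraph (Fin k)} [DecidableRel W.Adj]

theorem prismDegree_apply (a : VarSet k W →₀ ℕ) (x : Fin k ⊕ Fin k) :
    prismDegree W a x = ∑ p, a.extendDomain p * prismWeight p x := by
  rw [prismDegree, Finsupp.extendDomain_eq_embDomain_subtype, Finsupp.weight_apply,
    Finsupp.sum_apply, ← Finsupp.sum_fintype _ (fun p c => c * prismWeight p x) (by simp),
    Finsupp.sum_embDomain]
  rfl

theorem symm_of_sum_mul_prismWeight_eq_zero {F : Type*} [Field F] (h2 : (2 : F) ≠ 0)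
    (hconn : W.Connected) (hnb : ¬ W.Colorable 2) (hcount : #W.edgeFinset = k)
    {d : Fin k × Fin k → F} (hd : ∀ i j, i ≠ j → ¬ W.Adj i j → d (i, j) = 0)
    (hsum : ∀ x, ∑ p, d p * prismWeight p x = 0) (i j : Fin k) : d (i, j) = d (j, i) := by
  set S : Fin k → Fin k → F := fun i j => orientationSign F i j * (d (i, j) - d (j, i))
  have hsymm : ∀ i j, S i j = S j i := fun i j => by
    simp only [S, orientationSign_swap F j i]
    ring
  have hadj : ∀ i j, ¬ W.Adj i j → S i j = 0 := fun i j hij => by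
    by_cases h : i = j
    · simp [S, h]
    · simp [S, hd i j h hij, hd j i (Ne.symm h) (fun h' => hij h'.symm)]
  have hrow : ∀ t, ∑ j, S t j = 0 := fun t => by
    rw [sum_orientationSign_mul_sub]
    simp_rw [mul_sub, sum_sub_distrib, hsum, sub_self]
  have hij := W.eq_zero_of_symm_of_sum_eq_zero h2 hconn hnb (by simpa using hcount) hsymm hadj
    hrow i j
  rcases lt_trichotomy i j with h | rfl | h
  · simp only [S, orientationSign, if_pos h, if_neg h.not_gt] at hij
    linear_combination hij
  · rfl
  · simp only [S, orientationSign, if_neg h.not_gt, if_pos h] at hij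
    linear_combination -hij

theorem diag_eq_zero_of_sum_mul_prismWeight_eq_zero {R : Type*} [CommRing R]
    {d : Fin k × Fin k → R} (hoff : ∀ i j, i ≠ j → d (i, j) = 0) {t : Fin k}
    (hsum : ∑ p, d p * prismWeight p (.inl t) = 0) : d (t, t) = 0 := by
  have hrest : ∀ p ∈ univ, p ≠ (t, t) → d p * prismWeight p (.inl t) = 0 := by
    rintro ⟨i, j⟩ - hp
    by_cases hij : i = j
    · subst hij
      simp [prismWeight, show i ≠ t by rintro rfl; exact hp rfl]
    · simp [hoff i j hij]
  rw [sum_eq_single (t, t) hrest (by simp)] at hsum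
  simpa [prismWeight] using hsum

theorem IsStandardExponent.eq_of_prismDegree_eq (hconn : W.Connected) (hnb : ¬ W.Colorable 2)
    (hcount : #W.edgeFinset = k) {a b : VarSet k W →₀ ℕ} (ha : IsStandardExponent a)
    (hb : IsStandardExponent b) (hab : prismDegree W a = prismDegree W b) : a = b := by
  let d : Fin k × Fin k → ℚ := fun p => a.extendDomain p - b.extendDomain p
  have hsum : ∀ x, ∑ p, d p * prismWeight p x = 0 := fun x => by
    have := congr($hab x)
    rw [prismDegree_apply, prismDegree_apply] at this
    simp only [d, sub_mul, sum_sub_distrib, sub_eq_zero]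
    exact_mod_cast this
  have hsymm := symm_of_sum_mul_prismWeight_eq_zero two_ne_zero hconn hnb hcount
    (fun i j hij hadj => by simp [d, Finsupp.extendDomain_apply, hij, hadj]) hsum
  have hoff : ∀ i j, i ≠ j → d (i, j) = 0 := fun i j hij => by
    by_cases hadj : W.Adj i j
    · have hji := hsymm i j
      simp only [d, Finsupp.extendDomain_apply, hadj, hadj.symm, or_true, dif_pos] at hji ⊢
      have hji : (a ⟨(i, j), .inr hadj⟩ : ℤ) - b ⟨(i, j), .inr hadj⟩ =
          a ⟨(j, i), .inr hadj.symm⟩ - b ⟨(j, i), .inr hadj.symm⟩ := by exact_mod_cast hji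
      have hij : a ⟨(i, j), .inr hadj⟩ = b ⟨(i, j), .inr hadj⟩ := by
        rcases ha i j hadj with ha | ha <;> rcases hb i j hadj with hb | hb <;> omega
      simp [hij]
    · simp [d, Finsupp.extendDomain_apply, hij, hadj]
  have hd : ∀ p, d p = 0 := fun ⟨i, j⟩ => by
    by_cases hij : i = j
    · exact hij ▸ diag_eq_zero_of_sum_mul_prismWeight_eq_zero hoff (hsum (.inl i))
    · exact hoff i j hij
  have : a.extendDomain = b.extendDomain := Finsupp.ext fun p => by
    exact_mod_cast sub_eq_zero.1 (hd p)
  rw [← Finsupp.subtypeDomain_extendDomain a, ← Finsupp.subtypeDomain_extendDomain b, this]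

end Injectivity

theorem ker_le_PG (K : Type) [Field K] {k : ℕ} {W : SimpleGraph (Fin k)} [DecidableRel W.Adj]
    (hconn : W.Connected) (hnb : ¬ W.Colorable 2) (hcount : #W.edgeFinset = k) :
    RingHom.ker (prismMap K k W).toRingHom ≤ PG K k W :=
  ker_le_of_monomial_sub_monomial_mem (prismMap K k W) (prismDegree W) (prismMap_monomial K)
    fun a b hab => by
      obtain ⟨a', ha', hdeg_a, hmem_a⟩ := exists_isStandardExponent K a
      obtain ⟨b', hb', hdeg_b, hmem_b⟩ := exists_isStandardExponent K b
      obtain rfl : a' = b' :=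
        ha'.eq_of_prismDegree_eq hconn hnb hcount hb' (by rw [hdeg_a, hdeg_b, hab])
      simpa using sub_mem hmem_a hmem_b

/-- If `W` is connected, not bipartite, and has exactly one cycle
(equivalently, as many edges as vertices), then `P_W = I_{W*}`: the ideal `P_W` equals the
kernel of the `K`-algebra homomorphism `x_{ij} ↦ t_{p_i}t_{p_j}`, `x_{ji} ↦ t_{q_i}t_{q_j}`,
`x_{ii} ↦ t_{p_i}t_{q_i}`. -/
theorem PG_eq_toric_of_unicyclic_nonbipartite (K : Type) [Field K] (k : ℕ)
    (W : SimpleGraph (Fin k)) [DecidableRel W.Adj]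
    (hconn : W.Connected) (hnb : ¬ W.Colorable 2) (hcount : W.edgeFinset.card = k) :
    PG K k W = RingHom.ker (prismMap K k W).toRingHom :=
  le_antisymm (PG_le_ker K) (ker_le_PG K hconn hnb hcount)
end
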